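/- Let μ be a non-zero Radon measure on ℝⁿ with support Γ and let d : Γ → [0,∞) be such that for every x ∈ Γ one has 0 < D̄^{d(x)} μ(x) and 𝔻̄^{d(x)} μ(x) < ∞. Then dim_H Γ = sup_{x∈Γ} d(x). -/

import Mathlib

/-
Upper bound: let `t > sup d`. At each `x ∈ Γ`, `D̄^{d(x)} μ(x) > 0` and `d(x) < t` give, for every
`C`, arbitrarily small radii with `μ(B(x,ϱ)) ≥ C ϱ^t`. On a piece of `Γ` of finite measure, a
Besicovitch covering by such balls has `∑ diam^t ≤ 2^t (μ(piece) + 1) / C`, so `μH[t] Γ = 0`.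
Lower bound: `𝔻̄^{d(x)} μ(x) < ∞` gives `μ(B(y,ϱ)) ≤ C ϱ^{d(x)}` for all `y` near `x` and all small
`ϱ`, hence `μ(u ∩ B(x,r)) ≤ C diam(u)^{d(x)}` for small sets `u`. By the mass distribution principle
`μH[d(x)] Γ ≥ μ(B(x,r)) / C > 0`, as `x ∈ Γ`.
-/

open MeasureTheory Metric Filter Topology ENNReal

/-- The topological support of a Borel measure on `ℝⁿ`. -/
def msupport {n : ℕ} (μ : Measure (EuclideanSpace ℝ (Fin n))) :
    Set (EuclideanSpace ℝ (Fin n)) :=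
  {x | ∀ r : ℝ, 0 < r → 0 < μ (ball x r)}

/-- The upper `d`-density of a measure `μ` at `x`. -/
noncomputable def upperDensity {n : ℕ} (μ : Measure (EuclideanSpace ℝ (Fin n))) (d : ℝ)
    (x : EuclideanSpace ℝ (Fin n)) : ℝ≥0∞ :=
  Filter.limsup (fun r : ℝ => μ (ball x r) / ENNReal.ofReal (r ^ d)) (𝓝[>] (0 : ℝ))

/-- The locally uniform upper `d`-density of `μ` at `x`. -/
noncomputable def unifUpperDensity {n : ℕ} (μ : Measure (EuclideanSpace ℝ (Fin n))) (d : ℝ)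
    (x : EuclideanSpace ℝ (Fin n)) : ℝ≥0∞ :=
  ⨅ (r : ℝ) (_ : 0 < r),
    ⨆ (y : EuclideanSpace ℝ (Fin n)) (_ : y ∈ ball x r) (ϱ : ℝ) (_ : 0 < ϱ) (_ : ϱ ≤ r),
      μ (ball y ϱ) / ENNReal.ofReal (ϱ ^ d)

open Set

lemma continuous_const_mul_ofReal_rpow {C : ℝ≥0∞} (hC : C ≠ ∞) {p : ℝ} (hp : 0 ≤ p) :
    Continuous fun ϱ : ℝ => C * ENNReal.ofReal (ϱ ^ p) :=
  (ENNReal.continuous_const_mul hC).comp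
    (ENNReal.continuous_ofReal.comp (Real.continuous_rpow_const hp))

lemma ediam_closedBall_le {X : Type*} [PseudoMetricSpace X] {x : X} {ϱ : ℝ} (hϱ : 0 ≤ ϱ) :
    ediam (closedBall x ϱ) ≤ 2 * ENNReal.ofReal ϱ := by
  rw [← closedEBall_ofReal hϱ]
  exact ediam_closedEBall_le

lemma measure_inter_le_mul_ediam_rpow {X : Type*} [PseudoMetricSpace X] [MeasurableSpace X]
    (μ : Measure X) {U u : Set X} {C : ℝ≥0∞} (hC : C ≠ ∞) {d r : ℝ} (hd : 0 ≤ d)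
    (hball : ∀ y ∈ U, ∀ ϱ, 0 < ϱ → ϱ ≤ r → μ (ball y ϱ) ≤ C * ENNReal.ofReal (ϱ ^ d))
    (hu : ediam u < ENNReal.ofReal r) :
    μ (u ∩ U) ≤ C * ediam u ^ d := by
  rcases (u ∩ U).eq_empty_or_nonempty with hempty | ⟨y, hyu, hyU⟩
  · simp [hempty]
  set D := (ediam u).toReal
  have hDr : D < r := toReal_lt_of_lt_ofReal hu
  -- `u ∩ U` lies in every ball `B(y, ε)` with `ε > diam u`; let `ε ↓ diam u`.
  have hsub : ∀ ε, D < ε → u ∩ U ⊆ ball y ε := fun ε hε z hz =>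
    mem_ball.2 <| by
      rw [dist_edist]
      exact (toReal_mono hu.ne_top (edist_le_ediam_of_mem hz.1 hyu)).trans_lt hε
  have hbound : ∀ᶠ ε in 𝓝[>] D, μ (u ∩ U) ≤ C * ENNReal.ofReal (ε ^ d) := by
    filter_upwards [Ioo_mem_nhdsGT hDr] with ε hε
    exact (measure_mono (hsub ε hε.1)).trans
      (hball y hyU ε (toReal_nonneg.trans_lt hε.1) hε.2.le)
  calc μ (u ∩ U) ≤ C * ENNReal.ofReal (D ^ d) :=
        ge_of_tendsto (((continuous_const_mul_ofReal_rpow hC hd).tendsto D).mono_left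
          nhdsWithin_le_nhds) hbound
    _ = C * ediam u ^ d := by
        rw [← ENNReal.ofReal_rpow_of_nonneg toReal_nonneg hd, ofReal_toReal hu.ne_top]

lemma ofReal_le_dimH_of_measure_le_mul_ediam_rpow {X : Type*} [EMetricSpace X]
    [MeasurableSpace X] [BorelSpace X] (ν : Measure X) {K : ℝ≥0∞} (hK : K ≠ ∞) {d : ℝ}
    (hd : 0 ≤ d) {r : ℝ≥0∞} (hr : 0 < r) (h : ∀ u, ediam u ≤ r → ν u ≤ K * ediam u ^ d)
    {s : Set X} (hs : ν s ≠ 0) :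
    ENNReal.ofReal d ≤ dimH s := by
  have hle : K⁻¹ • ν ≤ μH[d] := Measure.le_hausdorffMeasure d _ r hr fun u hu => by
    rw [Measure.smul_apply, smul_eq_mul, mul_comm, ← div_eq_mul_inv]
    exact ENNReal.div_le_of_le_mul' (h u hu)
  have hpos : 0 < μH[d] s :=
    (ENNReal.mul_pos (ENNReal.inv_ne_zero.2 hK) hs).trans_le (hle s)
  exact le_dimH_of_hausdorffMeasure_ne_zero (d := d.toNNReal)
    (by rw [Real.coe_toNNReal d hd]; exact hpos.ne')

lemma ediam_closedBall_rpow_le {X : Type*} [PseudoMetricSpace X] [MeasurableSpace X]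
    (μ : Measure X) {x : X} {ϱ t : ℝ} (hϱ : 0 ≤ ϱ) (ht : 0 ≤ t) {C : ℝ≥0∞}
    (hC0 : C ≠ 0) (hC : C ≠ ∞) (h : C * ENNReal.ofReal (ϱ ^ t) ≤ μ (closedBall x ϱ)) :
    ediam (closedBall x ϱ) ^ t ≤ 2 ^ t * μ (closedBall x ϱ) / C := by
  calc ediam (closedBall x ϱ) ^ t ≤ (2 * ENNReal.ofReal ϱ) ^ t :=
        ENNReal.rpow_le_rpow (ediam_closedBall_le hϱ) ht
    _ = 2 ^ t * ENNReal.ofReal (ϱ ^ t) := by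
        rw [ENNReal.mul_rpow_of_nonneg _ _ ht, ENNReal.ofReal_rpow_of_nonneg hϱ ht]
    _ ≤ 2 ^ t * (μ (closedBall x ϱ) / C) := by
        gcongr
        exact (ENNReal.le_div_iff_mul_le (Or.inl hC0) (Or.inl hC)).2 (by rwa [mul_comm])
    _ = 2 ^ t * μ (closedBall x ϱ) / C := (mul_div_assoc _ _ _).symm

section Besicovitch

variable {X : Type*} [MetricSpace X] [SecondCountableTopology X] [MeasurableSpace X]
  [BorelSpace X] [HasBesicovitchCovering X] (μ : Measure X) [SFinite μ] [μ.OuterRegular]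

lemma exists_closedBall_covering_tsum_ediam_rpow_le {t : ℝ} (ht : 0 ≤ t) {C : ℝ≥0∞}
    (hC0 : C ≠ 0) (hC : C ≠ ∞) {s : Set X}
    (h : ∀ x ∈ s, ∃ᶠ ϱ in 𝓝[>] 0, C * ENNReal.ofReal (ϱ ^ t) ≤ μ (closedBall x ϱ))
    {δ : ℝ} (hδ : 0 < δ) :
    ∃ (T : Set X) (r : X → ℝ), T.Countable ∧ (∀ x ∈ T, r x ∈ Ioo 0 δ) ∧
      s ⊆ ⋃ x : T, closedBall (x : X) (r x) ∧
      ∑' x : T, ediam (closedBall (x : X) (r x)) ^ t ≤ 2 ^ t * (μ s + 1) / C := by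
  obtain ⟨T, r, hT, -, hr, hcover, hsum⟩ :=
    Besicovitch.exists_closedBall_covering_tsum_measure_le μ one_ne_zero
      (fun x => {ϱ | ϱ ∈ Ioo 0 δ ∧ C * ENNReal.ofReal (ϱ ^ t) ≤ μ (closedBall x ϱ)}) s
      fun x hx ε hε => ((h x hx).and_eventually (Ioo_mem_nhdsGT (lt_min hε hδ))).exists.imp
        fun ϱ ⟨hle, hϱ⟩ => ⟨⟨⟨hϱ.1, hϱ.2.trans_le (min_le_right _ _)⟩, hle⟩,
          hϱ.1, hϱ.2.trans_le (min_le_left _ _)⟩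
  refine ⟨T, r, hT, fun x hx => (hr x hx).1, hcover.trans_eq (biUnion_eq_iUnion _ _), ?_⟩
  calc ∑' x : T, ediam (closedBall (x : X) (r x)) ^ t
      ≤ ∑' x : T, 2 ^ t * μ (closedBall (x : X) (r x)) / C :=
        ENNReal.tsum_le_tsum fun x =>
          ediam_closedBall_rpow_le μ (hr x x.2).1.1.le ht hC0 hC (hr x x.2).2
    _ = 2 ^ t * (∑' x : T, μ (closedBall (x : X) (r x))) / C := by
        simp only [div_eq_mul_inv, ENNReal.tsum_mul_right, ENNReal.tsum_mul_left]
    _ ≤ 2 ^ t * (μ s + 1) / C := by gcongr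

lemma hausdorffMeasure_le_of_frequently_le_measure_closedBall {t : ℝ} (ht : 0 ≤ t)
    {C : ℝ≥0∞} (hC0 : C ≠ 0) (hC : C ≠ ∞) {s : Set X}
    (h : ∀ x ∈ s, ∃ᶠ ϱ in 𝓝[>] 0, C * ENNReal.ofReal (ϱ ^ t) ≤ μ (closedBall x ϱ)) :
    μH[t] s ≤ 2 ^ t * (μ s + 1) / C := by
  choose T r hT hrδ hcover hsum using fun k : ℕ =>
    exists_closedBall_covering_tsum_ediam_rpow_le μ ht hC0 hC h (Nat.one_div_pos_of_nat (n := k))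
  have := fun k => (hT k).to_subtype
  have hδ : Tendsto (fun k : ℕ => 2 * ENNReal.ofReal (1 / (k + 1))) atTop (𝓝 0) := by
    simpa using ENNReal.Tendsto.const_mul
      (ENNReal.tendsto_ofReal tendsto_one_div_add_atTop_nhds_zero_nat) (Or.inr ofNat_ne_top)
  have hdiam : ∀ k (x : T k),
      ediam (closedBall (x : X) (r k x)) ≤ 2 * ENNReal.ofReal (1 / (k + 1)) := fun k x =>
    (ediam_closedBall_le (hrδ k x x.2).1.le).trans (by gcongr; exact (hrδ k x x.2).2.le)
  calc μH[t] s ≤ liminf (fun k => ∑' x : T k, ediam (closedBall (x : X) (r k x)) ^ t) atTop :=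
        Measure.hausdorffMeasure_le_liminf_tsum t s _ hδ _ (.of_forall hdiam) (.of_forall hcover)
    _ ≤ 2 ^ t * (μ s + 1) / C := (liminf_le_liminf (.of_forall hsum)).trans_eq (liminf_const _)

lemma hausdorffMeasure_eq_zero_of_frequently_le_measure_closedBall [SigmaFinite μ] {t : ℝ}
    (ht : 0 ≤ t) {s : Set X}
    (h : ∀ x ∈ s, ∀ C ≠ ∞, ∃ᶠ ϱ in 𝓝[>] 0, C * ENNReal.ofReal (ϱ ^ t) ≤ μ (closedBall x ϱ)) :
    μH[t] s = 0 := by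
  have hpiece : ∀ i, μH[t] (s ∩ spanningSets μ i) = 0 := fun i => by
    set A := 2 ^ t * (μ (s ∩ spanningSets μ i) + 1)
    have hA0 : A ≠ 0 := mul_ne_zero (ENNReal.rpow_pos two_pos ofNat_ne_top).ne' (by simp)
    have hA : A ≠ ∞ := mul_ne_top (rpow_ne_top_of_nonneg ht ofNat_ne_top) <|
      add_ne_top.2 ⟨((measure_mono inter_subset_right).trans_lt
        (measure_spanningSets_lt_top μ i)).ne, one_ne_top⟩
    -- Taking `C = A / ε` makes the bound `A / C` equal to `ε`.
    refine le_antisymm (ENNReal.le_of_forall_pos_le_add fun ε hε _ => ?_) bot_le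
    rw [zero_add, ← ENNReal.div_div_cancel hA0 hA (b := ε)]
    exact hausdorffMeasure_le_of_frequently_le_measure_closedBall μ ht
      (ENNReal.div_pos hA0 coe_ne_top).ne' (ENNReal.div_ne_top hA (coe_ne_zero.2 hε.ne'))
      fun x hx => h x hx.1 _ (ENNReal.div_ne_top hA (coe_ne_zero.2 hε.ne'))
  rw [← inter_univ s, ← iUnion_spanningSets μ, inter_iUnion]
  exact measure_iUnion_null hpiece

end Besicovitch

section Support

variable {n : ℕ} {μ : Measure (EuclideanSpace ℝ (Fin n))}

lemma msupport_eq_support : msupport μ = μ.support :=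
  Set.ext fun _ => nhds_basis_ball.mem_measureSupport.symm

lemma exists_measure_ball_le_of_unifUpperDensity_ne_top {x : EuclideanSpace ℝ (Fin n)} {d : ℝ}
    (h : unifUpperDensity μ d x ≠ ∞) :
    ∃ r > 0, ∃ C ≠ ∞, ∀ y ∈ ball x r, ∀ ϱ, 0 < ϱ → ϱ ≤ r →
      μ (ball y ϱ) ≤ C * ENNReal.ofReal (ϱ ^ d) := by
  obtain ⟨r, hr⟩ := iInf_lt_iff.1 (lt_top_iff_ne_top.2 h)
  obtain ⟨hr0, hC⟩ := iInf_lt_iff.1 hr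
  refine ⟨r, hr0, _, hC.ne, fun y hy ϱ hϱ hϱr => ?_⟩
  refine (ENNReal.div_le_iff (by simpa using Real.rpow_pos_of_pos hϱ d) ofReal_ne_top).1 ?_
  exact le_iSup₂_of_le y hy <| le_iSup₂_of_le ϱ hϱ <| le_iSup_of_le hϱr le_rfl

lemma ofReal_le_dimH_msupport {x : EuclideanSpace ℝ (Fin n)} (hx : x ∈ msupport μ) {d : ℝ}
    (h : unifUpperDensity μ d x ≠ ∞) :
    ENNReal.ofReal d ≤ dimH (msupport μ) := by
  rcases lt_or_ge d 0 with hneg | hd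
  · simp [ofReal_of_nonpos hneg.le]
  obtain ⟨r, hr, C, hC, hball⟩ := exists_measure_ball_le_of_unifUpperDensity_ne_top h
  refine ofReal_le_dimH_of_measure_le_mul_ediam_rpow (μ.restrict (ball x r)) hC hd
    (ofReal_pos.2 (half_pos hr)) (fun u hu => ?_) ?_
  · rw [Measure.restrict_apply' measurableSet_ball]
    exact measure_inter_le_mul_ediam_rpow μ hC hd hball
      (hu.trans_lt ((ofReal_lt_ofReal_iff hr).2 (half_lt_self hr)))
  · rw [Measure.restrict_apply' measurableSet_ball, inter_comm, msupport_eq_support,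
      measure_inter_conull Measure.measure_compl_support]
    exact (hx r hr).ne'

lemma frequently_mul_ofReal_rpow_le_measure_closedBall {x : EuclideanSpace ℝ (Fin n)}
    {d t : ℝ} (hdt : d < t) (hpos : 0 < upperDensity μ d x) {C : ℝ≥0∞} (hC : C ≠ ∞) :
    ∃ᶠ ϱ in 𝓝[>] 0, C * ENNReal.ofReal (ϱ ^ t) ≤ μ (closedBall x ϱ) := by
  obtain ⟨c, hc0, hc⟩ := exists_between hpos
  have hfreq : ∃ᶠ ϱ in 𝓝[>] 0, c < μ (ball x ϱ) / ENNReal.ofReal (ϱ ^ d) :=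
    frequently_lt_of_lt_limsup (by isBoundedDefault) hc
  have hsmall : ∀ᶠ ϱ in 𝓝[>] 0, C * ENNReal.ofReal (ϱ ^ (t - d)) < c := by
    have := (continuous_const_mul_ofReal_rpow hC (sub_pos.2 hdt).le).tendsto 0
    rw [Real.zero_rpow (sub_pos.2 hdt).ne', ofReal_zero, mul_zero] at this
    exact (this.mono_left nhdsWithin_le_nhds).eventually (gt_mem_nhds hc0)
  refine (hfreq.and_eventually (hsmall.and self_mem_nhdsWithin)).mono
    fun ϱ ⟨hlt, hsm, (hϱ : 0 < ϱ)⟩ => ?_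
  calc C * ENNReal.ofReal (ϱ ^ t)
      = C * ENNReal.ofReal (ϱ ^ (t - d)) * ENNReal.ofReal (ϱ ^ d) := by
        rw [mul_assoc, ← ofReal_mul (Real.rpow_nonneg hϱ.le _), ← Real.rpow_add hϱ, sub_add_cancel]
    _ ≤ c * ENNReal.ofReal (ϱ ^ d) := by gcongr
    _ ≤ μ (ball x ϱ) := (ENNReal.le_div_iff_mul_le
        (Or.inl (by simpa using Real.rpow_pos_of_pos hϱ d)) (Or.inl ofReal_ne_top)).1 hlt.le
    _ ≤ μ (closedBall x ϱ) := measure_mono ball_subset_closedBall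

lemma dimH_msupport_le [IsFiniteMeasureOnCompacts μ] {d : EuclideanSpace ℝ (Fin n) → ℝ}
    (h : ∀ x ∈ msupport μ, 0 < upperDensity μ (d x) x) :
    dimH (msupport μ) ≤ ⨆ x ∈ msupport μ, ENNReal.ofReal (d x) := by
  refine dimH_le fun t ht => le_of_not_gt fun hlt => ?_
  have hlt_t : ∀ x ∈ msupport μ, d x < t := fun x hx => by
    refine (ofReal_lt_ofReal_iff'.1 ?_).1
    rw [ofReal_coe_nnreal]
    exact (le_biSup (fun x => ENNReal.ofReal (d x)) hx).trans_lt hlt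
  have hzero : μH[t] (msupport μ) = 0 :=
    hausdorffMeasure_eq_zero_of_frequently_le_measure_closedBall μ t.2 fun x hx _ hC =>
      frequently_mul_ofReal_rpow_le_measure_closedBall (hlt_t x hx) (h x hx) hC
  simp [hzero] at ht

end Support

theorem stmt10_general {n : ℕ} (μ : Measure (EuclideanSpace ℝ (Fin n))) [IsFiniteMeasureOnCompacts μ]
    (d : EuclideanSpace ℝ (Fin n) → ℝ)
    (h : ∀ x ∈ msupport μ,
      0 < upperDensity μ (d x) x ∧ unifUpperDensity μ (d x) x ≠ ⊤) :
    dimH (msupport μ) = ⨆ x ∈ msupport μ, ENNReal.ofReal (d x) :=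
  le_antisymm (dimH_msupport_le fun x hx => (h x hx).1)
    (iSup₂_le fun x hx => ofReal_le_dimH_msupport hx (h x hx).2)

/-- if `μ` is a non-zero Radon measure with support `Γ` and
`0 < D̄^{d(x)} μ(x)` and `𝔻̄^{d(x)} μ(x) < ∞` for every `x ∈ Γ`, then
`dim_H Γ = sup_{x∈Γ} d(x)`. -/
theorem stmt10 {n : ℕ} (μ : Measure (EuclideanSpace ℝ (Fin n))) [IsFiniteMeasureOnCompacts μ]
    (hμ : μ ≠ 0) (d : EuclideanSpace ℝ (Fin n) → ℝ)
    (hd0 : ∀ x ∈ msupport μ, 0 ≤ d x)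
    (h : ∀ x ∈ msupport μ,
      0 < upperDensity μ (d x) x ∧ unifUpperDensity μ (d x) x ≠ ⊤) :
    dimH (msupport μ) = ⨆ x ∈ msupport μ, ENNReal.ofReal (d x) :=
  stmt10_general μ d h
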